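/- Let Q be a unital quantale and (X, α) an object of Set(Q). The map m : Q^{Q^X} → Q^X given by m(Λ)(x) = ⋁_{γ ∈ Q^X} Λ(γ) ⊗ γ(x) satisfies α↓↓(Λ) = α↓(m(Λ)) for all Λ, where α↓(γ) = ⋀_x α(x) ⧸ γ(x) and α↓↓ = (α↓)↓. In particular m is a Goguen map (Q^{Q^X}, α↓↓) → (Q^X, α↓). -/

import Mathlib

/-!
By residuation, an element `b` lies below the left-hand side iff `b ⊗ Λ(γ) ⊗ γ(x) ≤ α(x)` for
all `γ` and `x`; since `⊗` distributes over joins, the same condition characterizes the elements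
below the right-hand side, up to the order of the two quantifiers.
-/

/-- Left implication in a unital quantale: `ldd r q = r ⧸ q`. -/
def ldd {Q : Type*} [Monoid Q] [CompleteLattice Q] (r q : Q) : Q := sSup {p | p * q ≤ r}

/-- Right implication in a unital quantale: `rdd p r = p ⧹ r`. -/
def rdd {Q : Type*} [Monoid Q] [CompleteLattice Q] (p r : Q) : Q := sSup {q | p * q ≤ r}

/-- Image of a `Q`-valued map along `f`. -/
noncomputable def fim {X Y : Type*} {Q : Type*} [CompleteLattice Q] (f : X → Y) (α : X → Q) :
    Y → Q := fun y => ⨆ x ∈ f ⁻¹' {y}, α x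

section Residuation

variable {Q : Type*} [Monoid Q] [CompleteLattice Q] [IsQuantale Q]

lemma le_ldd_iff {p r q : Q} : p ≤ ldd r q ↔ p * q ≤ r :=
  Quantale.leftMulResiduation_le_iff_mul_le

lemma le_iInf_ldd_iff {ι : Type*} {b : Q} {r q : ι → Q} :
    b ≤ ⨅ i, ldd (r i) (q i) ↔ ∀ i, b * q i ≤ r i := by
  simp only [le_iInf_iff, le_ldd_iff]

end Residuation

theorem mult_map_goguen {X : Type*} {Q : Type*} [Monoid Q] [CompleteLattice Q]
    [IsQuantale Q] (α : X → Q) (Λ : (X → Q) → Q) :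
    (⨅ γ : X → Q, ldd (⨅ x, ldd (α x) (γ x)) (Λ γ)) =
      ⨅ x, ldd (α x) (⨆ γ : X → Q, Λ γ * γ x) := by
  refine eq_of_forall_le_iff fun b => ?_
  simp only [le_iInf_ldd_iff, Quantale.mul_iSup_distrib, iSup_le_iff, mul_assoc]
  exact forall_comm
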